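/- The group Sp(d,ℝ) is generated by the set {V_C : C a symmetric real d×d matrix} ∪ {D_L : L an invertible real d×d matrix} ∪ {J}, i.e. the subgroup generated by this set is all of Sp(d,ℝ). -/

import Mathlib

open Matrix

/-- The standard symplectic form matrix `J = [[0, I], [-I, 0]]` in `d × d` block form. -/
def Jmat (d : ℕ) : Matrix (Fin d ⊕ Fin d) (Fin d ⊕ Fin d) ℝ :=
  Matrix.fromBlocks 0 1 (-1) 0

open Matrix Polynomial

-- key existence lemma
lemma key {n : Type*} [Fintype n] [DecidableEq n] (A C : Matrix n n ℝ)
    (hsym : Aᵀ * C = Cᵀ * A)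
    (hker : ∀ v, A.mulVec v = 0 → C.mulVec v = 0 → v = 0) :
    ∃ t : ℝ, IsUnit (C + t • A).det := by
  classical
  have dot_self_nonneg : ∀ v : n → ℝ, 0 ≤ v ⬝ᵥ v := fun v =>
    Finset.sum_nonneg fun i _ => mul_self_nonneg (v i)
  -- N := AᵀA + CᵀC has nonzero determinant
  have hN : (Aᵀ * A + Cᵀ * C).det ≠ 0 := by
    intro h0
    obtain ⟨v, hv, hNv⟩ := (Matrix.exists_mulVec_eq_zero_iff).2 h0
    have h1 : v ⬝ᵥ (Aᵀ * A + Cᵀ * C).mulVec v = 0 := by rw [hNv, dotProduct_zero]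
    have hAA : v ⬝ᵥ (Aᵀ * A).mulVec v = (A.mulVec v) ⬝ᵥ (A.mulVec v) := by
      rw [← Matrix.mulVec_mulVec, Matrix.dotProduct_mulVec, Matrix.vecMul_transpose]
    have hCC : v ⬝ᵥ (Cᵀ * C).mulVec v = (C.mulVec v) ⬝ᵥ (C.mulVec v) := by
      rw [← Matrix.mulVec_mulVec, Matrix.dotProduct_mulVec, Matrix.vecMul_transpose]
    rw [Matrix.add_mulVec, dotProduct_add, hAA, hCC] at h1
    have hA0 : (A.mulVec v) ⬝ᵥ (A.mulVec v) = 0 := by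
      have := dot_self_nonneg (A.mulVec v); have := dot_self_nonneg (C.mulVec v); linarith
    have hC0 : (C.mulVec v) ⬝ᵥ (C.mulVec v) = 0 := by
      have := dot_self_nonneg (A.mulVec v); have := dot_self_nonneg (C.mulVec v); linarith
    exact hv (hker v (dotProduct_self_eq_zero.mp hA0) (dotProduct_self_eq_zero.mp hC0))
  set ρ : ℝ →+* ℂ := algebraMap ℝ ℂ with hρ
  -- complex invertibility
  have hfactor : ((Aᵀ).map ρ - Complex.I • (Cᵀ).map ρ) * (A.map ρ + Complex.I • C.map ρ)
      = ρ.mapMatrix (Aᵀ * A + Cᵀ * C) := by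
    have hmap : (Aᵀ).map ρ * (C.map ρ) = (Cᵀ).map ρ * (A.map ρ) := by
      rw [← Matrix.map_mul, ← Matrix.map_mul, hsym]
    rw [sub_mul, mul_add, mul_add, Matrix.smul_mul, Matrix.mul_smul, Matrix.mul_smul,
      Matrix.smul_mul, hmap, smul_smul, Complex.I_mul_I, map_add, _root_.map_mul, _root_.map_mul,
      RingHom.mapMatrix_apply, RingHom.mapMatrix_apply, RingHom.mapMatrix_apply,
      RingHom.mapMatrix_apply]
    module
  have hdetc : (A.map ρ + Complex.I • C.map ρ).det ≠ 0 := by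
    intro h
    apply hN
    have : (ρ.mapMatrix (Aᵀ * A + Cᵀ * C)).det = 0 := by
      rw [← hfactor, Matrix.det_mul, h, mul_zero]
    rw [← RingHom.map_det, hρ, Complex.coe_algebraMap, Complex.ofReal_eq_zero] at this
    exact this
  -- determinant of C + (-I)•A over ℂ is nonzero
  have hdetc2 : (C.map ρ + (-Complex.I) • A.map ρ).det ≠ 0 := by
    have hform : C.map ρ + (-Complex.I) • A.map ρ
        = (-Complex.I) • (A.map ρ + Complex.I • C.map ρ) := by
      rw [smul_add, smul_smul]
      simp [neg_mul, Complex.I_mul_I]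
      abel
    rw [hform, Matrix.det_smul]
    refine mul_ne_zero (pow_ne_zero _ ?_) hdetc
    simp [Complex.ext_iff]
  -- polynomial argument
  set Mp : Matrix n n ℝ[X] := C.map Polynomial.C + (X : ℝ[X]) • A.map Polynomial.C with hMp
  have hmapaeval : Mp.map (Polynomial.aeval (-Complex.I)) = C.map ρ + (-Complex.I) • A.map ρ := by
    ext i j
    simp [hMp, Matrix.map_apply, Matrix.add_apply, Matrix.smul_apply, smul_eq_mul, hρ,
      Complex.coe_algebraMap]
    ring
  have hp : Mp.det ≠ 0 := by
    intro h
    apply hdetc2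
    have := congrArg (Polynomial.aeval (-Complex.I) : ℝ[X] →ₐ[ℝ] ℂ) h
    rw [map_zero] at this
    rw [AlgHom.map_det, AlgHom.mapMatrix_apply, hmapaeval] at this
    exact this
  by_contra hcon
  push_neg at hcon
  apply hp
  apply Polynomial.zero_of_eval_zero
  intro t
  have hmapt : Mp.map (Polynomial.eval t) = C + t • A := by
    ext i j
    simp [hMp, Matrix.map_apply, Matrix.add_apply, Matrix.smul_apply, smul_eq_mul]
    ring
  have hdet0 : (C + t • A).det = 0 := by
    by_contra hne
    exact hcon t (isUnit_iff_ne_zero.mpr hne)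
  have h2 : Polynomial.eval t Mp.det = (Mp.map (Polynomial.eval t)).det := by
    have := RingHom.map_det (Polynomial.evalRingHom t) Mp
    simpa only [RingHom.mapMatrix_apply, Polynomial.coe_evalRingHom] using this
  rw [h2, hmapt, hdet0]

namespace SpGen

variable {d : ℕ}

abbrev SM (d : ℕ) := Matrix (Fin d) (Fin d) ℝ
abbrev BM (d : ℕ) := Matrix (Fin d ⊕ Fin d) (Fin d ⊕ Fin d) ℝ

lemma J_mul_J : Jmat d * Jmat d = -1 := by
  have h : (-1 : BM d) = fromBlocks (-1) (-0) (-0) (-1) := by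
    rw [← Matrix.fromBlocks_neg, fromBlocks_one]
  rw [Jmat, fromBlocks_multiply, h]
  simp

lemma J_transpose : (Jmat d)ᵀ = -Jmat d := by
  rw [Jmat, fromBlocks_transpose, Matrix.fromBlocks_neg]
  simp

def Ju : (BM d)ˣ where
  val := Jmat d
  inv := -Jmat d
  val_inv := by rw [mul_neg, J_mul_J, neg_neg]
  inv_val := by rw [neg_mul, J_mul_J, neg_neg]

def Vu (C : SM d) : (BM d)ˣ where
  val := fromBlocks 1 0 C 1
  inv := fromBlocks 1 0 (-C) 1
  val_inv := by rw [fromBlocks_multiply]; simp [fromBlocks_one]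
  inv_val := by rw [fromBlocks_multiply]; simp [fromBlocks_one]

noncomputable def Du (L : SM d) (h : IsUnit L.det) : (BM d)ˣ where
  val := fromBlocks L⁻¹ 0 0 Lᵀ
  inv := fromBlocks L 0 0 Lᵀ⁻¹
  val_inv := by
    rw [fromBlocks_multiply]
    simp [Matrix.nonsing_inv_mul L h,
      Matrix.mul_nonsing_inv Lᵀ (by rwa [Matrix.det_transpose]), fromBlocks_one]
  inv_val := by
    rw [fromBlocks_multiply]
    simp [Matrix.mul_nonsing_inv L h,
      Matrix.nonsing_inv_mul Lᵀ (by rwa [Matrix.det_transpose]), fromBlocks_one]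

@[simp] lemma Ju_val : ((Ju : (BM d)ˣ) : BM d) = Jmat d := rfl
@[simp] lemma Ju_inv_val : ((Ju⁻¹ : (BM d)ˣ) : BM d) = -Jmat d := rfl
@[simp] lemma Vu_val (C : SM d) : ((Vu C : (BM d)ˣ) : BM d) = fromBlocks 1 0 C 1 := rfl
@[simp] lemma Du_val (L : SM d) (h : IsUnit L.det) :
    ((Du L h : (BM d)ˣ) : BM d) = fromBlocks L⁻¹ 0 0 Lᵀ := rfl

def IsSp (S : BM d) : Prop := Sᵀ * Jmat d * S = Jmat d

lemma isSp_mul {S T : BM d} (hS : IsSp S) (hT : IsSp T) : IsSp (S * T) := by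
  unfold IsSp at *
  calc (S * T)ᵀ * Jmat d * (S * T) = Tᵀ * (Sᵀ * Jmat d * S) * T := by
        simp only [transpose_mul, mul_assoc]
    _ = Tᵀ * Jmat d * T := by rw [hS]
    _ = Jmat d := hT

lemma isSp_J : IsSp (Jmat d) := by
  unfold IsSp
  rw [J_transpose, neg_mul, neg_mul, J_mul_J]
  simp

lemma isSp_one : IsSp (1 : BM d) := by simp [IsSp]

lemma isSp_V (C : SM d) (hC : Cᵀ = C) : IsSp (fromBlocks 1 0 C 1) := by
  unfold IsSp
  rw [Jmat, fromBlocks_transpose, fromBlocks_multiply, fromBlocks_multiply]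
  simp [hC]

lemma isSp_D (L : SM d) (h : IsUnit L.det) : IsSp (fromBlocks L⁻¹ 0 0 Lᵀ) := by
  unfold IsSp
  rw [Jmat, fromBlocks_transpose, fromBlocks_multiply, fromBlocks_multiply]
  simp [Matrix.transpose_nonsing_inv,
    Matrix.nonsing_inv_mul Lᵀ (by rwa [Matrix.det_transpose]),
    Matrix.mul_nonsing_inv L h]

lemma isSp_inv (g : (BM d)ˣ) (h : IsSp (g : BM d)) : IsSp ((g⁻¹ : (BM d)ˣ) : BM d) := by
  unfold IsSp at *
  have hab : (g : BM d) * ((g⁻¹ : (BM d)ˣ) : BM d) = 1 := g.mul_inv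
  calc ((g⁻¹ : (BM d)ˣ) : BM d)ᵀ * Jmat d * ((g⁻¹ : (BM d)ˣ) : BM d)
      = ((g⁻¹ : (BM d)ˣ) : BM d)ᵀ * ((g : BM d)ᵀ * Jmat d * (g : BM d))
        * ((g⁻¹ : (BM d)ˣ) : BM d) := by rw [h]
    _ = ((g : BM d) * ((g⁻¹ : (BM d)ˣ) : BM d))ᵀ * Jmat d
        * ((g : BM d) * ((g⁻¹ : (BM d)ˣ) : BM d)) := by
        simp only [transpose_mul, mul_assoc]
    _ = Jmat d := by rw [hab]; simp

lemma isSp_transpose (g : (BM d)ˣ) (h : IsSp (g : BM d)) : IsSp ((g : BM d)ᵀ) := by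
  have hST : (g : BM d)ᵀ = Jmat d * ((g⁻¹ : (BM d)ˣ) : BM d) * (-Jmat d) := by
    have h1 : (g : BM d)ᵀ * Jmat d = Jmat d * ((g⁻¹ : (BM d)ˣ) : BM d) := by
      have h2 := congrArg (fun M => M * ((g⁻¹ : (BM d)ˣ) : BM d)) h
      simp only [mul_assoc, Units.mul_inv, mul_one] at h2
      exact h2
    calc (g : BM d)ᵀ = (g : BM d)ᵀ * (Jmat d * (-Jmat d)) := by
          rw [mul_neg, J_mul_J, neg_neg, mul_one]
      _ = ((g : BM d)ᵀ * Jmat d) * (-Jmat d) := by rw [mul_assoc]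
      _ = Jmat d * ((g⁻¹ : (BM d)ˣ) : BM d) * (-Jmat d) := by rw [h1]
  rw [hST]
  have hnJ : IsSp (-Jmat d) := by
    unfold IsSp
    simp only [transpose_neg, neg_mul, mul_neg, neg_neg]
    exact isSp_J
  exact isSp_mul (isSp_mul isSp_J (isSp_inv g h)) hnJ

lemma blocks_of_sp {A B C D : SM d} (h : IsSp (fromBlocks A B C D)) :
    Aᵀ * C = Cᵀ * A ∧ Aᵀ * D - Cᵀ * B = 1 ∧ Bᵀ * D = Dᵀ * B := by
  unfold IsSp at h
  rw [Jmat, fromBlocks_transpose, fromBlocks_multiply, fromBlocks_multiply] at h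
  simp only [Matrix.mul_zero, Matrix.zero_mul, Matrix.mul_one, Matrix.one_mul,
    Matrix.mul_neg, Matrix.neg_mul, add_zero, zero_add, neg_zero] at h
  have h11 := congrArg Matrix.toBlocks₁₁ h
  have h12 := congrArg Matrix.toBlocks₁₂ h
  have h22 := congrArg Matrix.toBlocks₂₂ h
  simp only [Matrix.toBlocks_fromBlocks₁₁, Matrix.toBlocks_fromBlocks₁₂,
    Matrix.toBlocks_fromBlocks₂₂] at h11 h12 h22
  refine ⟨?_, ?_, ?_⟩
  · rw [neg_add_eq_sub, sub_eq_zero] at h11; exact h11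
  · rw [neg_add_eq_sub] at h12; exact h12
  · rw [neg_add_eq_sub, sub_eq_zero] at h22; exact h22



def Gens (d : ℕ) : Set (BM d)ˣ :=
  {g : (BM d)ˣ |
    (∃ C : Matrix (Fin d) (Fin d) ℝ, Cᵀ = C ∧
      (g : BM d) = Matrix.fromBlocks 1 0 C 1) ∨
    (∃ L : Matrix (Fin d) (Fin d) ℝ, IsUnit L.det ∧
      (g : BM d) = Matrix.fromBlocks L⁻¹ 0 0 Lᵀ) ∨
    ((g : BM d) = Jmat d)}

lemma Vu_mem (C : SM d) (hC : Cᵀ = C) : Vu C ∈ Subgroup.closure (Gens d) :=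
  Subgroup.subset_closure (Or.inl ⟨C, hC, rfl⟩)

lemma Du_mem (L : SM d) (h : IsUnit L.det) : Du L h ∈ Subgroup.closure (Gens d) :=
  Subgroup.subset_closure (Or.inr (Or.inl ⟨L, h, rfl⟩))

lemma Ju_mem : (Ju : (BM d)ˣ) ∈ Subgroup.closure (Gens d) :=
  Subgroup.subset_closure (Or.inr (Or.inr rfl))

lemma mem_closure_of_sp (g : (BM d)ˣ) (hg : IsSp (g : BM d)) :
    g ∈ Subgroup.closure (Gens d) := by
  classical
  obtain ⟨A, B, C, D, hS⟩ :
      ∃ A B C D, (g : BM d) = fromBlocks A B C D :=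
    ⟨_, _, _, _, (fromBlocks_toBlocks (g : BM d)).symm⟩
  obtain ⟨hAC, -, -⟩ := blocks_of_sp (hS ▸ hg)
  -- joint kernel of A and C is trivial
  have hker : ∀ v, A.mulVec v = 0 → C.mulVec v = 0 → v = 0 := by
    intro v hA hC
    have hw : (g : BM d).mulVec (Sum.elim v 0) = 0 := by
      rw [hS, fromBlocks_mulVec]
      funext i
      cases i <;>
        simp [Sum.elim_comp_inl, Sum.elim_comp_inr, hA, hC, Matrix.mulVec_zero]
    have h0 : Sum.elim v (0 : Fin d → ℝ) = 0 := by
      have h2 := congrArg (fun w => Matrix.mulVec ((g⁻¹ : (BM d)ˣ) : BM d) w) hw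
      simp only [Matrix.mulVec_mulVec, Matrix.mulVec_zero] at h2
      rw [Units.inv_mul] at h2
      rwa [Matrix.one_mulVec] at h2
    exact funext fun i => congrFun h0 (Sum.inl i)
  obtain ⟨t, ht⟩ := key A C hAC hker
  set A₁ : SM d := t • A + C with hA₁
  set B₁ : SM d := t • B + D with hB₁
  set C₁ : SM d := -A with hC₁
  set D₁ : SM d := -B with hD₁def
  have hA1det : IsUnit A₁.det := by rw [hA₁, add_comm]; exact ht
  have hdetT : IsUnit A₁ᵀ.det := by rwa [Matrix.det_transpose]
  have hts : ((t • (1 : SM d)))ᵀ = t • (1 : SM d) := by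
    rw [transpose_smul, transpose_one]
  set g₁ : (BM d)ˣ := Ju * Vu (t • (1 : SM d)) * g with hg₁def
  have hg₁sp : IsSp (g₁ : BM d) := by
    rw [hg₁def]
    exact isSp_mul (isSp_mul isSp_J (isSp_V _ hts)) hg
  have hval₁ : (g₁ : BM d) = fromBlocks A₁ B₁ C₁ D₁ := by
    rw [hg₁def]
    show Jmat d * fromBlocks 1 0 (t • (1 : SM d)) 1 * (g : BM d) = _
    rw [hS, Jmat, fromBlocks_multiply, fromBlocks_multiply]
    simp [Matrix.smul_mul, hA₁, hB₁, hC₁, hD₁def]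
  obtain ⟨k11, k12, -⟩ := blocks_of_sp (hval₁ ▸ hg₁sp)
  have htr : IsSp (fromBlocks A₁ᵀ C₁ᵀ B₁ᵀ D₁ᵀ) := by
    have := isSp_transpose g₁ hg₁sp
    rwa [hval₁, fromBlocks_transpose] at this
  obtain ⟨m11, -, -⟩ := blocks_of_sp htr
  rw [transpose_transpose, transpose_transpose] at m11
  -- m11 : A₁ * B₁ᵀ = B₁ * A₁ᵀ
  have hXsym : (C₁ * A₁⁻¹)ᵀ = C₁ * A₁⁻¹ := by
    calc (C₁ * A₁⁻¹)ᵀ = A₁⁻¹ᵀ * C₁ᵀ := by rw [transpose_mul]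
      _ = A₁ᵀ⁻¹ * C₁ᵀ := by rw [Matrix.transpose_nonsing_inv]
      _ = A₁ᵀ⁻¹ * (C₁ᵀ * A₁ * A₁⁻¹) := by
          rw [Matrix.mul_nonsing_inv_cancel_right _ _ hA1det]
      _ = A₁ᵀ⁻¹ * (A₁ᵀ * C₁ * A₁⁻¹) := by rw [k11]
      _ = A₁ᵀ⁻¹ * (A₁ᵀ * (C₁ * A₁⁻¹)) := by rw [mul_assoc]
      _ = C₁ * A₁⁻¹ := Matrix.nonsing_inv_mul_cancel_left _ _ hdetT
  have hYsym : (A₁⁻¹ * B₁)ᵀ = A₁⁻¹ * B₁ := by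
    calc (A₁⁻¹ * B₁)ᵀ = B₁ᵀ * A₁⁻¹ᵀ := by rw [transpose_mul]
      _ = B₁ᵀ * A₁ᵀ⁻¹ := by rw [Matrix.transpose_nonsing_inv]
      _ = A₁⁻¹ * (A₁ * B₁ᵀ) * A₁ᵀ⁻¹ := by
          rw [Matrix.nonsing_inv_mul_cancel_left _ _ hA1det]
      _ = A₁⁻¹ * (B₁ * A₁ᵀ) * A₁ᵀ⁻¹ := by rw [m11]
      _ = A₁⁻¹ * B₁ * (A₁ᵀ * A₁ᵀ⁻¹) := by simp only [mul_assoc]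
      _ = A₁⁻¹ * B₁ := by rw [Matrix.mul_nonsing_inv _ hdetT, mul_one]
  have hAC1 : A₁ᵀ⁻¹ * C₁ᵀ = C₁ * A₁⁻¹ := by
    rw [← Matrix.transpose_nonsing_inv, ← transpose_mul, hXsym]
  have hD₁ : D₁ = C₁ * A₁⁻¹ * B₁ + A₁ᵀ⁻¹ := by
    have e1 : A₁ᵀ * D₁ = 1 + C₁ᵀ * B₁ := sub_eq_iff_eq_add.mp k12
    have e2 := congrArg (fun M => A₁ᵀ⁻¹ * M) e1
    rw [Matrix.nonsing_inv_mul_cancel_left _ _ hdetT] at e2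
    rw [e2, mul_add, mul_one, ← mul_assoc, hAC1, add_comm]
  have hdet_inv : IsUnit (A₁⁻¹).det := Matrix.isUnit_nonsing_inv_det A₁ hA1det
  have hYsym' : (-(A₁⁻¹ * B₁))ᵀ = -(A₁⁻¹ * B₁) := by rw [transpose_neg, hYsym]
  have hdecomp : g₁ = Vu (C₁ * A₁⁻¹) * Du A₁⁻¹ hdet_inv *
      (Ju * Vu (-(A₁⁻¹ * B₁)) * Ju⁻¹) := by
    apply Units.ext
    show (g₁ : BM d) = fromBlocks 1 0 (C₁ * A₁⁻¹) 1 *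
        fromBlocks A₁⁻¹⁻¹ 0 0 A₁⁻¹ᵀ * (Jmat d * fromBlocks 1 0 (-(A₁⁻¹ * B₁)) 1 * (-Jmat d))
    have hU : Jmat d * fromBlocks 1 0 (-(A₁⁻¹ * B₁)) 1 * (-Jmat d)
        = fromBlocks 1 (A₁⁻¹ * B₁) 0 1 := by
      rw [Jmat, Matrix.fromBlocks_neg, fromBlocks_multiply, fromBlocks_multiply]
      simp
    rw [hU, Matrix.nonsing_inv_nonsing_inv _ hA1det, Matrix.transpose_nonsing_inv,
      fromBlocks_multiply, fromBlocks_multiply, hval₁]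
    simp only [Matrix.mul_zero, Matrix.zero_mul, Matrix.one_mul, Matrix.mul_one,
      add_zero, zero_add]
    rw [Matrix.mul_nonsing_inv_cancel_left _ _ hA1det,
      Matrix.nonsing_inv_mul_cancel_right _ _ hA1det, ← mul_assoc, hD₁]
  have hg₁mem : g₁ ∈ Subgroup.closure (Gens d) := by
    rw [hdecomp]
    exact mul_mem (mul_mem (Vu_mem _ hXsym) (Du_mem _ hdet_inv))
      (mul_mem (mul_mem Ju_mem (Vu_mem _ hYsym')) (inv_mem Ju_mem))
  have hgeq : g = (Vu (t • (1 : SM d)))⁻¹ * ((Ju : (BM d)ˣ)⁻¹ * g₁) := by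
    rw [hg₁def]
    group
  rw [hgeq]
  exact mul_mem (inv_mem (Vu_mem _ hts)) (mul_mem (inv_mem Ju_mem) hg₁mem)

def SpSub (d : ℕ) : Subgroup (BM d)ˣ where
  carrier := {g : (BM d)ˣ | IsSp (g : BM d)}
  mul_mem' := fun ha hb => by
    simp only [Set.mem_setOf_eq, Units.val_mul] at *
    exact isSp_mul ha hb
  one_mem' := by
    simp only [Set.mem_setOf_eq, Units.val_one]
    exact isSp_one
  inv_mem' := fun h => isSp_inv _ h

lemma closure_eq_sp : (Subgroup.closure (Gens d) : Set (BM d)ˣ) = {g : (BM d)ˣ | IsSp (g : BM d)} := by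
  apply Set.eq_of_subset_of_subset
  · intro g hg
    have hle : Subgroup.closure (Gens d) ≤ SpSub d := by
      rw [Subgroup.closure_le]
      intro x hx
      rcases hx with ⟨C, hC, hx⟩ | ⟨L, hL, hx⟩ | hx
      · show IsSp (x : BM d); rw [hx]; exact isSp_V C hC
      · show IsSp (x : BM d); rw [hx]; exact isSp_D L hL
      · show IsSp (x : BM d); rw [hx]; exact isSp_J
    exact hle hg
  · intro g hg
    exact mem_closure_of_sp g hg

end SpGen

/-- The symplectic group `Sp(d, ℝ) = {S : Sᵀ J S = J}` is generated (as a subgroup of the units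
of the matrix ring) by the matrices `V_C = [[I, 0], [C, I]]` (`C` symmetric),
`D_L = [[L⁻¹, 0], [0, Lᵀ]]` (`L` invertible), and `J`. -/
theorem stmt2 (d : ℕ) (hd : 1 ≤ d) :
    (Subgroup.closure {g : (Matrix (Fin d ⊕ Fin d) (Fin d ⊕ Fin d) ℝ)ˣ |
        (∃ C : Matrix (Fin d) (Fin d) ℝ, Cᵀ = C ∧
          (g : Matrix (Fin d ⊕ Fin d) (Fin d ⊕ Fin d) ℝ) = Matrix.fromBlocks 1 0 C 1) ∨
        (∃ L : Matrix (Fin d) (Fin d) ℝ, IsUnit L.det ∧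
          (g : Matrix (Fin d ⊕ Fin d) (Fin d ⊕ Fin d) ℝ) = Matrix.fromBlocks L⁻¹ 0 0 Lᵀ) ∨
        ((g : Matrix (Fin d ⊕ Fin d) (Fin d ⊕ Fin d) ℝ) = Jmat d)} :
      Set (Matrix (Fin d ⊕ Fin d) (Fin d ⊕ Fin d) ℝ)ˣ) =
    {g : (Matrix (Fin d ⊕ Fin d) (Fin d ⊕ Fin d) ℝ)ˣ |
      (g : Matrix (Fin d ⊕ Fin d) (Fin d ⊕ Fin d) ℝ)ᵀ * Jmat d *
        (g : Matrix (Fin d ⊕ Fin d) (Fin d ⊕ Fin d) ℝ) = Jmat d} := by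
  exact SpGen.closure_eq_sp (d := d)
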